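/- If a continuous map f on a compact metric space with at least two points is minimal and has shadowing, then f does not have mean ergodic shadowing. -/

import Mathlib

/-!
Fix `a ≠ b`, let `δ` witness shadowing for `ε = dist a b / 3`, and suppose `f` also has mean
ergodic shadowing. Restart the orbit of `b` at `b` at the beginning of each of a sequence of
blocks, each longer than everything before it; the jumps have density zero, so some point `p`
follows this ergodic pseudo-orbit at some time in each of two consecutive late blocks. Splicing
the orbit of `p` between these two times into the orbit of `b` gives two δ-loops at `b` whose
lengths differ by a block length. Taking block lengths `≡ 1` modulo the length of one δ-loop
yields δ-loops of consecutive lengths, hence of all large lengths `N`. So some δ-pseudo-orbit runs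
from `a` to `b` and then returns to `b` every `N` steps; a point shadowing it starts near `a`,
while `f^[N * j]` of it stays near `b` for all large `j`. This contradicts the recurrence of
every point under `f^[N]`, which holds in a minimal system because the point lies in an
`f^[i]`-image of a minimal set of `f^[N]`.
-/

open Filter Metric

noncomputable def cnt (E : Set ℕ) (n : ℕ) : ℝ :=
  ∑ i ∈ Finset.range n, Set.indicator E (fun _ => (1 : ℝ)) i

def DensityZero (E : Set ℕ) : Prop :=
  Filter.Tendsto (fun n : ℕ => cnt E n / n) Filter.atTop (nhds 0)

noncomputable def upperDensity (E : Set ℕ) : ℝ :=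
  Filter.limsup (fun n : ℕ => cnt E n / n) Filter.atTop

noncomputable def lowerDensity (E : Set ℕ) : ℝ :=
  Filter.liminf (fun n : ℕ => cnt E n / n) Filter.atTop

variable {X : Type*}

def ErgodicPseudoOrbit [MetricSpace X] (f : X → X) (δ : ℝ) (ξ : ℕ → X) : Prop :=
  DensityZero {i | δ ≤ dist (f (ξ i)) (ξ (i + 1))}

def AvgShadows [MetricSpace X] (f : X → X) (ε : ℝ) (p : X) (ξ : ℕ → X) : Prop :=
  Filter.limsup (fun n : ℕ => (∑ i ∈ Finset.range n, dist (f^[i] p) (ξ i)) / n) Filter.atTop < ε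

def MeanErgodicShadowingAvg [MetricSpace X] (f : X → X) : Prop :=
  ∀ ε > 0, ∃ δ > 0, ∀ ξ : ℕ → X, ErgodicPseudoOrbit f δ ξ → ∃ p : X, AvgShadows f ε p ξ

def MeanErgodicShadowingDens [MetricSpace X] (f : X → X) : Prop :=
  ∀ ε > 0, ∃ δ > 0, ∀ ξ : ℕ → X, ErgodicPseudoOrbit f δ ξ →
    ∃ p : X, upperDensity {i | ε ≤ dist (f^[i] p) (ξ i)} < ε

def Shadowing [MetricSpace X] (f : X → X) : Prop :=
  ∀ ε > 0, ∃ δ > 0, ∀ ξ : ℕ → X, (∀ i, dist (f (ξ i)) (ξ (i + 1)) < δ) →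
    ∃ p : X, ∀ i, dist (f^[i] p) (ξ i) < ε

def MinimalMap [TopologicalSpace X] (f : X → X) : Prop :=
  ∀ x : X, Dense (Set.range fun n : ℕ => f^[n] x)

open Set

def concatSeq (c₁ c₂ : ℕ → X) (m : ℕ) : ℕ → X :=
  fun i => if i ≤ m then c₁ i else c₂ (i - m)

lemma concatSeq_of_le {c₁ c₂ : ℕ → X} {m i : ℕ} (h : i ≤ m) :
    concatSeq c₁ c₂ m i = c₁ i :=
  if_pos h

lemma concatSeq_of_ge {c₁ c₂ : ℕ → X} {m i : ℕ} (hm : c₁ m = c₂ 0) (h : m ≤ i) :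
    concatSeq c₁ c₂ m i = c₂ (i - m) := by
  rcases h.eq_or_lt with rfl | h
  · rw [concatSeq_of_le le_rfl, hm, Nat.sub_self]
  · exact if_neg h.not_ge

lemma dist_concatSeq_lt [PseudoMetricSpace X] {f : X → X} {δ : ℝ} {c₁ c₂ : ℕ → X}
    {m i : ℕ} (hm : c₁ m = c₂ 0)
    (h₁ : i < m → dist (f (c₁ i)) (c₁ (i + 1)) < δ)
    (h₂ : m ≤ i → dist (f (c₂ (i - m))) (c₂ (i - m + 1)) < δ) :
    dist (f (concatSeq c₁ c₂ m i)) (concatSeq c₁ c₂ m (i + 1)) < δ := by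
  by_cases hi : i < m
  · rw [concatSeq_of_le hi.le, concatSeq_of_le hi]
    exact h₁ hi
  · rw [concatSeq_of_ge hm (not_lt.1 hi), concatSeq_of_ge hm (by omega),
      Nat.sub_add_comm (not_lt.1 hi)]
    exact h₂ (not_lt.1 hi)

section Chains

variable [PseudoMetricSpace X] {f : X → X} {δ : ℝ}

def DeltaChain (f : X → X) (δ : ℝ) (x y : X) (n : ℕ) : Prop :=
  ∃ c : ℕ → X, c 0 = x ∧ c n = y ∧ ∀ i < n, dist (f (c i)) (c (i + 1)) < δ

namespace DeltaChain

lemma refl (x : X) : DeltaChain f δ x x 0 :=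
  ⟨fun _ => x, rfl, rfl, by simp⟩

lemma trans {x y z : X} {m n : ℕ} (hxy : DeltaChain f δ x y m) (hyz : DeltaChain f δ y z n) :
    DeltaChain f δ x z (m + n) := by
  obtain ⟨c₁, hc₁0, hc₁m, hc₁⟩ := hxy
  obtain ⟨c₂, hc₂0, hc₂n, hc₂⟩ := hyz
  have hm : c₁ m = c₂ 0 := hc₁m.trans hc₂0.symm
  refine ⟨concatSeq c₁ c₂ m, by rw [concatSeq_of_le (Nat.zero_le m), hc₁0], ?_,
    fun i hi => ?_⟩
  · rw [concatSeq_of_ge hm (Nat.le_add_right m n), Nat.add_sub_cancel_left, hc₂n]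
  · exact dist_concatSeq_lt hm (hc₁ i) fun h => hc₂ _ (by omega)

lemma of_dist_iterate_lt {x y : X} {n : ℕ} (hn : 0 < n) (h : dist (f^[n] x) y < δ) :
    DeltaChain f δ x y n := by
  have hδ : 0 < δ := dist_nonneg.trans_lt h
  refine ⟨fun i => if i < n then f^[i] x else y, by simp [hn], by simp, fun i hi => ?_⟩
  simp only [if_pos hi, ← Function.iterate_succ_apply' f i x]
  split_ifs with h'
  · simpa using hδ
  · rwa [Nat.succ_eq_add_one, show i + 1 = n by omega]

lemma exists_pseudoOrbit_loop {x y : X} {m N : ℕ} (hN : 0 < N) (hxy : DeltaChain f δ x y m)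
    (hy : DeltaChain f δ y y N) :
    ∃ ξ : ℕ → X, ξ 0 = x ∧ (∀ k, ξ (m + N * k) = y) ∧
      ∀ i, dist (f (ξ i)) (ξ (i + 1)) < δ := by
  obtain ⟨c₁, hc₁0, hc₁m, hc₁⟩ := hxy
  obtain ⟨c₂, hc₂0, hc₂N, hc₂⟩ := hy
  have hm : c₁ m = c₂ (0 % N) := by rw [Nat.zero_mod, hc₁m, hc₂0]
  have hper : ∀ i, dist (f (c₂ (i % N))) (c₂ ((i + 1) % N)) < δ := by
    intro i
    rw [← Nat.mod_add_mod]
    have := hc₂ _ (Nat.mod_lt i hN)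
    rcases (Nat.add_one_le_of_lt (Nat.mod_lt i hN)).lt_or_eq with h | h
    · rwa [Nat.mod_eq_of_lt h]
    · rw [h]
      rwa [h, hc₂N, ← hc₂0, ← Nat.mod_self N] at this
  refine ⟨concatSeq c₁ (fun i => c₂ (i % N)) m,
    by rw [concatSeq_of_le (Nat.zero_le m), hc₁0],
    fun k => ?_, fun i => dist_concatSeq_lt hm (hc₁ i) fun _ => hper _⟩
  rw [concatSeq_of_ge (c₂ := fun i => c₂ (i % N)) hm (Nat.le_add_right _ _)]
  simp [hc₂0]

lemma splice {b p : X} {i j u v n : ℕ} (hu : 0 < u) (hij : i < j) (hvn : v < n)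
    (hi : dist (f^[u] b) (f^[i] p) < δ) (hj : dist (f^[j] p) (f^[v] b) < δ)
    (hn : dist (f^[n] b) b < δ) : DeltaChain f δ b b (u + (j - i) + (n - v)) := by
  have h₁ : DeltaChain f δ b (f^[i] p) u := of_dist_iterate_lt hu hi
  have h₂ : DeltaChain f δ (f^[i] p) (f^[v] b) (j - i) :=
    of_dist_iterate_lt (by omega) <| by
      rwa [← Function.iterate_add_apply, Nat.sub_add_cancel hij.le]
  have h₃ : DeltaChain f δ (f^[v] b) b (n - v) :=
    of_dist_iterate_lt (by omega) <| by
      rwa [← Function.iterate_add_apply, Nat.sub_add_cancel hvn.le]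
  exact (h₁.trans h₂).trans h₃

end DeltaChain

def loopLengths (f : X → X) (δ : ℝ) (x : X) : AddSubmonoid ℕ where
  carrier := {n | DeltaChain f δ x x n}
  zero_mem' := DeltaChain.refl x
  add_mem' := DeltaChain.trans

@[simp]
lemma mem_loopLengths {x : X} {n : ℕ} : n ∈ loopLengths f δ x ↔ DeltaChain f δ x x n :=
  Iff.rfl

end Chains

lemma AddSubmonoid.nat_mem_of_mul_self_le {S : AddSubmonoid ℕ} {s n : ℕ} (hs : s ∈ S)
    (hs' : s + 1 ∈ S) (hn : s * s ≤ n) : n ∈ S := by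
  have key : (n / s - n % s) * s + n % s * (s + 1) = n := by
    rcases s.eq_zero_or_pos with rfl | hs₀
    · simp
    · have h₁ : n % s < s := Nat.mod_lt n hs₀
      have h₂ : s ≤ n / s := (Nat.le_div_iff_mul_le hs₀).2 hn
      have h₃ := Nat.div_add_mod' n s
      rw [Nat.sub_mul, mul_add, mul_one]
      have : n % s * s ≤ n / s * s := Nat.mul_le_mul_right s (by omega)
      omega
  rw [← key]
  exact add_mem (S.nsmul_mem hs _) (S.nsmul_mem hs' _)

lemma cnt_eq_card (E : Set ℕ) [DecidablePred (· ∈ E)] (n : ℕ) :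
    cnt E n = ((Finset.range n).filter (· ∈ E)).card := by
  simp [cnt, Set.indicator_apply, Finset.sum_boole]

lemma cnt_nonneg (E : Set ℕ) (n : ℕ) : 0 ≤ cnt E n := by
  classical
  rw [cnt_eq_card]
  exact Nat.cast_nonneg _

lemma cnt_le (E : Set ℕ) (n : ℕ) : cnt E n ≤ n := by
  classical
  rw [cnt_eq_card]
  exact_mod_cast (Finset.card_filter_le _ _).trans (Finset.card_range n).le

lemma cnt_mono {E F : Set ℕ} (h : E ⊆ F) (n : ℕ) : cnt E n ≤ cnt F n := by
  classical
  simp only [cnt_eq_card]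
  exact_mod_cast Finset.card_le_card (Finset.monotone_filter_right _ fun _ _ hi => h hi)

lemma sub_le_cnt_of_Ico_subset {E : Set ℕ} {a b : ℕ} (hab : a ≤ b) (h : Ico a b ⊆ E) :
    (b : ℝ) - a ≤ cnt E b := by
  classical
  rw [cnt_eq_card, ← Nat.cast_sub hab, ← Nat.card_Ico]
  refine Nat.cast_le.2 (Finset.card_le_card fun i hi => ?_)
  rw [Finset.mem_Ico] at hi
  simpa [hi.2] using h hi

lemma DensityZero.mono {E F : Set ℕ} (h : E ⊆ F) (hF : DensityZero F) : DensityZero E :=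
  squeeze_zero (fun n => div_nonneg (cnt_nonneg E n) n.cast_nonneg)
    (fun n => div_le_div_of_nonneg_right (cnt_mono h n) n.cast_nonneg) hF

lemma densityZero_setOf_add_one_mem_range {e : ℕ → ℕ} (he : ∀ k, 2 ^ k ≤ e k + 1) :
    DensityZero {i | i + 1 ∈ range e} := by
  classical
  have hcnt : ∀ n, cnt {i | i + 1 ∈ range e} n ≤ Nat.log 2 (n + 1) + 1 := by
    intro n
    rw [cnt_eq_card]
    have hsub : (Finset.range n).filter (· ∈ {i | i + 1 ∈ range e}) ⊆
        (Finset.range (Nat.log 2 (n + 1) + 1)).image (fun k => e k - 1) := by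
      intro i hi
      simp only [Finset.mem_filter, Finset.mem_range, mem_ofPred_eq, mem_range] at hi
      obtain ⟨hin, k, hk⟩ := hi
      have : k ≤ Nat.log 2 (n + 1) := Nat.le_log_of_pow_le one_lt_two (by linarith [he k])
      exact Finset.mem_image.2 ⟨k, Finset.mem_range.2 (by omega), by omega⟩
    have := (Finset.card_le_card hsub).trans Finset.card_image_le
    rw [Finset.card_range] at this
    exact_mod_cast this
  have hlog : Tendsto (fun n : ℕ => (Real.logb 2 ((n : ℝ) + 1) + 1) / n) atTop (nhds 0) := by
    have h := (Real.tendsto_pow_log_div_mul_add_atTop 1 (-1) 1 one_ne_zero).comp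
      (tendsto_atTop_add_const_right atTop 1 tendsto_natCast_atTop_atTop)
    have := ((h.div_const (Real.log 2)).add (tendsto_const_div_atTop_nhds_zero_nat 1))
    simp only [zero_div, add_zero] at this
    refine this.congr fun n => ?_
    simp [Real.logb, add_div, div_right_comm]
  refine squeeze_zero (fun n => div_nonneg (cnt_nonneg _ n) n.cast_nonneg) (fun n => ?_) hlog
  gcongr
  refine (hcnt n).trans (add_le_add_left ?_ 1)
  exact_mod_cast Real.natLog_le_logb (n + 1) 2

lemma exists_notMem_Ico_of_upperDensity_lt {E : Set ℕ} (hE : upperDensity E < 1 / 2) :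
    ∃ n₀, ∀ a b, n₀ ≤ b → a < b → 2 * a ≤ b → ∃ i ∈ Ico a b, i ∉ E := by
  have hbdd : IsBoundedUnder (· ≤ ·) atTop fun n : ℕ => cnt E n / n :=
    isBoundedUnder_of ⟨1, fun n => div_le_one_of_le₀ (cnt_le E n) n.cast_nonneg⟩
  obtain ⟨n₀, hn₀⟩ := eventually_atTop.1 (eventually_lt_of_limsup_lt hE hbdd)
  refine ⟨n₀, fun a b hb hab h2 => ?_⟩
  by_contra! hsub
  have hcnt := sub_le_cnt_of_Ico_subset hab.le hsub
  have hlt := hn₀ b hb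
  rw [div_lt_iff₀ (by exact_mod_cast hab.trans_le' (Nat.zero_le a))] at hlt
  have : (2 * a : ℝ) ≤ b := by exact_mod_cast h2
  linarith

lemma MinimalMap.exists_le_dist_iterate_lt [PseudoMetricSpace X] {f : X → X} (hmin : MinimalMap f)
    (x y : X) (M : ℕ) {ρ : ℝ} (hρ : 0 < ρ) : ∃ n, M ≤ n ∧ dist (f^[n] x) y < ρ := by
  obtain ⟨_, hz, s, rfl⟩ := Metric.dense_iff.1 (hmin (f^[M] x)) y ρ hρ
  refine ⟨s + M, Nat.le_add_left M s, ?_⟩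
  rw [Function.iterate_add_apply, ← mem_ball]
  exact hz

lemma MinimalMap.exists_deltaChain [PseudoMetricSpace X] {f : X → X} {δ : ℝ}
    (hmin : MinimalMap f) (hδ : 0 < δ) (x y : X) : ∃ n, 0 < n ∧ DeltaChain f δ x y n := by
  obtain ⟨n, hn, h⟩ := hmin.exists_le_dist_iterate_lt x y 1 hδ
  exact ⟨n, hn, .of_dist_iterate_lt hn h⟩

open Classical in
noncomputable def restartOrbit (f : X → X) (x : X) (T : Set ℕ) : ℕ → X
  | 0 => x
  | i + 1 => if i + 1 ∈ T then x else f (restartOrbit f x T i)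

section restartOrbit

variable {f : X → X} {x : X} {T : Set ℕ}

lemma restartOrbit_succ_of_notMem {i : ℕ} (h : i + 1 ∉ T) :
    restartOrbit f x T (i + 1) = f (restartOrbit f x T i) := by
  simp [restartOrbit, h]

lemma restartOrbit_of_mem {a : ℕ} (ha : a ∈ T) : restartOrbit f x T a = x := by
  cases a <;> simp [restartOrbit, ha]

lemma restartOrbit_add_of_mem {a : ℕ} (ha : a ∈ T) {r : ℕ}
    (h : ∀ i, a < i → i ≤ a + r → i ∉ T) :
    restartOrbit f x T (a + r) = f^[r] x := by
  induction r with
  | zero => exact restartOrbit_of_mem ha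
  | succ r ih =>
    rw [← add_assoc, restartOrbit_succ_of_notMem (h (a + r + 1) (by omega) le_rfl),
      ih fun i hi hi' => h i hi (by omega), Function.iterate_succ_apply']

lemma restartOrbit_range_apply {t : ℕ → ℕ} (ht : StrictMono t) {k i : ℕ} (hi : t k ≤ i)
    (hi' : i < t (k + 1)) : restartOrbit f x (range t) i = f^[i - t k] x := by
  obtain ⟨r, rfl⟩ := Nat.exists_eq_add_of_le hi
  rw [Nat.add_sub_cancel_left]
  refine restartOrbit_add_of_mem (mem_range_self k) ?_
  rintro _ h h' ⟨l, rfl⟩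
  have := ht.lt_iff_lt.1 h
  have := ht.lt_iff_lt.1 (h'.trans_lt hi')
  omega

end restartOrbit

section MeanErgodicShadowing

variable [MetricSpace X] {f : X → X} {δ : ℝ}

lemma MeanErgodicShadowingDens.exists_mem_loopLengths_add_block
    (hmes : MeanErgodicShadowingDens f) (hmin : MinimalMap f) (hδ : 0 < δ) (b : X)
    {t : ℕ → ℕ} (ht : ∀ k, 2 * (t k + 1) ≤ t (k + 1)) :
    ∃ k n, n ∈ loopLengths f δ b ∧ n + (t (k + 1) - t k) ∈ loopLengths f δ b := by
  have htpow : ∀ k, 2 ^ k ≤ t k + 1 := by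
    intro k
    induction k with
    | zero => simp
    | succ k ih => rw [pow_succ]; linarith [ht k]
  have htmono : StrictMono t := strictMono_nat_of_lt_succ fun k => by linarith [ht k]
  set ξ := restartOrbit f b (range t)
  obtain ⟨δ', hδ', hshad⟩ := hmes (min δ (1 / 2)) (by positivity)
  have hjumps : {i | δ' ≤ dist (f (ξ i)) (ξ (i + 1))} ⊆ {i | i + 1 ∈ range t} := by
    intro i hi
    by_contra h
    rw [mem_ofPred_eq, show ξ (i + 1) = f (ξ i) from restartOrbit_succ_of_notMem h,
      dist_self] at hi
    exact hi.not_gt hδ'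
  obtain ⟨p, hp⟩ := hshad ξ ((densityZero_setOf_add_one_mem_range htpow).mono hjumps)
  obtain ⟨n₀, hn₀⟩ := exists_notMem_Ico_of_upperDensity_lt (hp.trans_le (min_le_right _ _))
  have hgood : ∀ k, n₀ ≤ k →
      ∃ i, t k < i ∧ i < t (k + 1) ∧ dist (f^[i] p) (f^[i - t k] b) < δ := by
    intro k hk
    have := (Nat.lt_two_pow_self (n := k + 1)).trans_le (htpow (k + 1))
    obtain ⟨i, hi, hiE⟩ := hn₀ (t k + 1) (t (k + 1)) (by omega) (by linarith [ht k]) (ht k)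
    rw [mem_Ico] at hi
    refine ⟨i, hi.1, hi.2, ?_⟩
    rw [← restartOrbit_range_apply htmono (Nat.le_of_lt hi.1) hi.2]
    exact (not_le.1 hiE).trans_le (min_le_left _ _)
  obtain ⟨i, hi, hi', hpi⟩ := hgood n₀ le_rfl
  obtain ⟨j, hj, hj', hpj⟩ := hgood (n₀ + 1) (Nat.le_succ n₀)
  obtain ⟨n, hn, hret⟩ := hmin.exists_le_dist_iterate_lt b b (j - t (n₀ + 1) + 1) hδ
  refine ⟨n₀, n, DeltaChain.of_dist_iterate_lt (by omega) hret, ?_⟩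
  rw [mem_loopLengths]
  convert DeltaChain.splice (i := i) (u := i - t n₀) (by omega) (by omega) (by omega)
    (by rwa [dist_comm]) hpj hret using 1
  omega

lemma MeanErgodicShadowingDens.exists_consecutive_mem_loopLengths
    (hmes : MeanErgodicShadowingDens f) (hmin : MinimalMap f) (hδ : 0 < δ) (b : X) :
    ∃ s, s ∈ loopLengths f δ b ∧ s + 1 ∈ loopLengths f δ b := by
  obtain ⟨m, hm, hloop⟩ := hmin.exists_deltaChain hδ b b
  -- block lengths `≡ 1 (mod m)`, each longer than everything before it
  let t : ℕ → ℕ := fun k => k.rec 0 fun _ s => s + (m * (s + 1) + 1)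
  have ht : ∀ k, t (k + 1) = t k + (m * (t k + 1) + 1) := fun _ => rfl
  obtain ⟨k, n, hn, hn'⟩ := hmes.exists_mem_loopLengths_add_block hmin hδ b (t := t)
    fun k => by
      rw [ht]
      nlinarith [Nat.le_mul_of_pos_left (t k + 1) hm]
  refine ⟨n + (t k + 1) • m, add_mem hn (AddSubmonoid.nsmul_mem _ hloop _), ?_⟩
  rw [ht, Nat.add_sub_cancel_left] at hn'
  convert hn' using 1
  rw [smul_eq_mul]
  ring

lemma MeanErgodicShadowingDens.eventually_mem_loopLengths (hmes : MeanErgodicShadowingDens f)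
    (hmin : MinimalMap f) (hδ : 0 < δ) (b : X) : ∀ᶠ n in atTop, n ∈ loopLengths f δ b := by
  obtain ⟨s, hs, hs'⟩ := hmes.exists_consecutive_mem_loopLengths hmin hδ b
  exact eventually_atTop.2 ⟨s * s, fun n hn => AddSubmonoid.nat_mem_of_mul_self_le hs hs' hn⟩

end MeanErgodicShadowing

section Recurrence

variable [TopologicalSpace X]

def IsMinimalSet (g : X → X) (Y : Set X) : Prop :=
  Minimal (fun Z : Set X => Z.Nonempty ∧ IsClosed Z ∧ MapsTo g Z Z) Y

lemma exists_isMinimalSet [CompactSpace X] [Nonempty X] (g : X → X) :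
    ∃ Y, IsMinimalSet g Y := by
  obtain ⟨Y, -, hY⟩ := zorn_superset_nonempty
    {Z : Set X | Z.Nonempty ∧ IsClosed Z ∧ MapsTo g Z Z}
    (fun c hc hchain hne => by
      have := hne.to_subtype
      refine ⟨⋂₀ c, ⟨?_, isClosed_sInter fun Z hZ => (hc hZ).2.1,
        fun x hx Z hZ => (hc hZ).2.2 (hx Z hZ)⟩, fun _ => sInter_subset_of_mem⟩
      exact IsCompact.nonempty_sInter_of_directed_nonempty_isCompact_isClosed
        (IsChain.directedOn (r := fun a b : Set X => a ⊇ b) hchain.symm) (fun Z hZ => (hc hZ).1)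
        (fun Z hZ => (hc hZ).2.1.isCompact) fun Z hZ => (hc hZ).2.1)
    univ ⟨univ_nonempty, isClosed_univ, mapsTo_univ g _⟩
  exact ⟨Y, hY⟩

lemma IsMinimalSet.frequently_iterate_mem {g : X → X} {Y : Set X} (hY : IsMinimalSet g Y)
    (hg : Continuous g) {y : X} (hy : y ∈ Y) {U : Set X} (hU : U ∈ nhds y) :
    ∃ᶠ n in atTop, g^[n] y ∈ U := by
  refine frequently_atTop.2 fun M => ?_
  set C := closure (range fun n => g^[M + n] y)
  have hC : C.Nonempty ∧ IsClosed C ∧ MapsTo g C C := by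
    refine ⟨(range_nonempty _).closure, isClosed_closure, MapsTo.closure ?_ hg⟩
    rintro _ ⟨n, rfl⟩
    exact ⟨n + 1, by simp only [← add_assoc, Function.iterate_succ_apply']⟩
  have hCY : C ⊆ Y := hY.prop.2.1.closure_subset_iff.2 <| range_subset_iff.2 fun n =>
    hY.prop.2.2.iterate _ hy
  obtain ⟨_, hzU, n, rfl⟩ := mem_closure_iff_nhds.1 (hY.le_of_le hC hCY hy) U hU
  exact ⟨M + n, Nat.le_add_right M n, hzU⟩

lemma MinimalMap.eq_univ_of_isClosed_mapsTo {f : X → X} (hmin : MinimalMap f) {Y : Set X}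
    (hne : Y.Nonempty) (hc : IsClosed Y) (hf : MapsTo f Y Y) : Y = univ := by
  obtain ⟨y, hy⟩ := hne
  refine eq_univ_of_univ_subset ?_
  rw [← (hmin y).closure_eq]
  exact hc.closure_subset_iff.2 (range_subset_iff.2 fun n => hf.iterate n hy)

variable [CompactSpace X] [T2Space X] {f : X → X}

lemma MinimalMap.iUnion_iterate_image_eq_univ (hmin : MinimalMap f) (hf : Continuous f) {N : ℕ}
    (hN : 0 < N) {Y : Set X} (hne : Y.Nonempty) (hc : IsClosed Y) (hY : MapsTo f^[N] Y Y) :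
    ⋃ i < N, f^[i] '' Y = univ := by
  refine hmin.eq_univ_of_isClosed_mapsTo ?_ ?_ ?_
  · exact ⟨_, mem_biUnion hN (mem_image_of_mem _ hne.some_mem)⟩
  · exact (finite_lt_nat N).isClosed_biUnion fun i _ =>
      (hc.isCompact.image (hf.iterate i)).isClosed
  · rintro _ hx
    simp only [mem_iUnion, mem_image] at hx ⊢
    obtain ⟨i, hi, y, hy, rfl⟩ := hx
    rcases (Nat.succ_le_of_lt hi).lt_or_eq with h | h
    · exact ⟨i + 1, h, y, hy, Function.iterate_succ_apply' f i y⟩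
    · exact ⟨0, hN, _, hY hy, by rw [← h, Function.iterate_succ_apply']; rfl⟩

lemma MinimalMap.frequently_iterate_mul_mem (hmin : MinimalMap f) (hf : Continuous f) {N : ℕ}
    (hN : 0 < N) (p : X) {U : Set X} (hU : U ∈ nhds p) :
    ∃ᶠ j in atTop, f^[N * j] p ∈ U := by
  have : Nonempty X := ⟨p⟩
  obtain ⟨Y, hY⟩ := exists_isMinimalSet f^[N]
  have hp : p ∈ ⋃ i < N, f^[i] '' Y :=
    (hmin.iUnion_iterate_image_eq_univ hf hN hY.prop.1 hY.prop.2.1 hY.prop.2.2).symm ▸ mem_univ p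
  simp only [mem_iUnion, mem_image] at hp
  obtain ⟨i, -, y, hy, rfl⟩ := hp
  refine (hY.frequently_iterate_mem (hf.iterate N) hy
    ((hf.iterate i).continuousAt.preimage_mem_nhds hU)).mono fun j hj => ?_
  rwa [mem_preimage, ← Function.iterate_mul, ← Function.iterate_add_apply, add_comm,
    Function.iterate_add_apply] at hj

end Recurrence

theorem stmt16 {X : Type*} [MetricSpace X] [CompactSpace X] [Nontrivial X]
    (f : X → X) (hf : Continuous f) (hmin : MinimalMap f) (hs : Shadowing f) :
    ¬ MeanErgodicShadowingDens f := by
  intro hmes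
  obtain ⟨a, b, hab⟩ := exists_pair_ne X
  have hε : 0 < dist a b / 3 := by have := dist_pos.2 hab; positivity
  obtain ⟨δ, hδ, hshad⟩ := hs _ hε
  obtain ⟨N₀, hN₀⟩ := eventually_atTop.1 (hmes.eventually_mem_loopLengths hmin hδ b)
  obtain ⟨m, -, ham⟩ := hmin.exists_deltaChain hδ a b
  set N := N₀ + 1
  have hab' : DeltaChain f δ a b (N * (m + 1)) := by
    have hN : N * (m + 1) = N₀ * m + N₀ + m + 1 := by ring
    have := ham.trans (hN₀ (N * (m + 1) - m) (by omega))
    rwa [Nat.add_sub_cancel' (by omega)] at this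
  obtain ⟨ξ, hξ0, hξb, hξ⟩ :=
    hab'.exists_pseudoOrbit_loop N₀.succ_pos (hN₀ N N₀.le_succ)
  obtain ⟨p, hp⟩ := hshad ξ hξ
  obtain ⟨j, hjp, hj⟩ := ((hmin.frequently_iterate_mul_mem hf N₀.succ_pos p
    (ball_mem_nhds p hε)).and_eventually (eventually_ge_atTop (m + 1))).exists
  obtain ⟨k, rfl⟩ := Nat.exists_eq_add_of_le hj
  have hpa : dist a p < dist a b / 3 := by simpa [hξ0, dist_comm] using hp 0
  have hpb : dist (f^[N * (m + 1 + k)] p) b < dist a b / 3 := by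
    have := hp (N * (m + 1) + N * k)
    rwa [hξb, ← mul_add] at this
  rw [mem_ball, dist_comm] at hjp
  linarith [dist_triangle4 a p (f^[N * (m + 1 + k)] p) b]
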